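/- arXiv:0912.2212 — 2 statements merged into one kernel-verified Lean document; each statement's English description precedes it below -/
import Mathlib

section
/- Any element f of the biHecke monoid fixing the identity is contracting for Bruhat order: if 1·f = 1 then w·f ≤_B w for all w ∈ W. -/
open scoped Classical

noncomputable section

variable {B W : Type*} [Group W] {M : CoxeterMatrix B}

/-- The elementary bubble antisorting operator `π_i` on a Coxeter group:
`w·π_i = w` if `i` is a right descent of `w`, and `w·π_i = w s_i` otherwise. -/
noncomputable def piOp (cs : CoxeterSystem M W) (i : B) : W → W :=
  fun w => if cs.IsRightDescent w i then w else w * cs.simple i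

/-- The elementary bubble sorting operator `π̄_i` on a Coxeter group:
`w·π̄_i = w s_i` if `i` is a right descent of `w`, and `w·π̄_i = w` otherwise. -/
noncomputable def pibOp (cs : CoxeterSystem M W) (i : B) : W → W :=
  fun w => if cs.IsRightDescent w i then w * cs.simple i else w

/-- The biHecke monoid: the submonoid of `Function.End W` generated by the antisorting
operators `π_i` and the sorting operators `π̄_i`. -/
noncomputable def biHecke (cs : CoxeterSystem M W) : Submonoid (Function.End W) :=
  Submonoid.closure ({f | ∃ i, f = piOp cs i} ∪ {f | ∃ i, f = pibOp cs i})

/-- Left weak order: `u ≤_L v` iff `ℓ(v u⁻¹) + ℓ(u) = ℓ(v)`. -/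
noncomputable def leL (cs : CoxeterSystem M W) (u v : W) : Prop :=
  cs.length (v * u⁻¹) + cs.length u = cs.length v

/-- Right weak order: `u ≤_R v` iff `ℓ(u) + ℓ(u⁻¹ v) = ℓ(v)`. -/
noncomputable def leR (cs : CoxeterSystem M W) (u v : W) : Prop :=
  cs.length u + cs.length (u⁻¹ * v) = cs.length v

/-- Bruhat order: `u ≤_B v` iff some reduced word of `v` has a subword with product `u`. -/
noncomputable def leB (cs : CoxeterSystem M W) (u v : W) : Prop :=
  ∃ l : List B, cs.IsReduced l ∧ cs.wordProd l = v ∧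
    ∃ l' : List B, l'.Sublist l ∧ cs.wordProd l' = u

/-- Right action of a word of operators: apply the operators from left to right. -/
noncomputable def actWord (ops : B → W → W) (l : List B) (w : W) : W :=
  l.foldl (fun x i => ops i x) w

/-- The function `e_w = π_{w⁻¹ w₀} π̄_{w₀ w}` (given reduced words `l1` for `w⁻¹ w₀` and
`l2` for `w₀ w`), acting on the right. -/
noncomputable def eIdem (cs : CoxeterSystem M W) (l1 l2 : List B) : W → W :=
  fun x => actWord (pibOp cs) l2 (actWord (piOp cs) l1 x)

/-- The parabolic subgroup `W_K`. -/
noncomputable def parab (cs : CoxeterSystem M W) (K : Set B) : Subgroup W :=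
  Subgroup.closure (cs.simple '' K)

/-- `K` is a right block of `w` if `w W_K = W_J w` for some `J`. -/
noncomputable def isRightBlock (cs : CoxeterSystem M W) (w : W) (K : Set B) : Prop :=
  ∃ J : Set B, (fun x => w * x) '' (parab cs K : Set W) = (fun x => x * w) '' (parab cs J : Set W)

/-- `J` is a left block of `w` if `w W_K = W_J w` for some `K`. -/
noncomputable def isLeftBlock (cs : CoxeterSystem M W) (w : W) (J : Set B) : Prop :=
  ∃ K : Set B, (fun x => w * x) '' (parab cs K : Set W) = (fun x => x * w) '' (parab cs J : Set W)

/-- The cutting relation: `v ⊑ w` iff `v = w^K` for some right block `K` of `w`, i.e.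
`w = v · u` with `u ∈ W_K` and `v` has no right descents in `K`. -/
noncomputable def cuts (cs : CoxeterSystem M W) (v w : W) : Prop :=
  ∃ K J : Set B,
    ((fun x => w * x) '' (parab cs K : Set W) = (fun x => x * w) '' (parab cs J : Set W)) ∧
    ∃ u ∈ parab cs K, w = v * u ∧ ∀ k ∈ K, ¬ cs.IsRightDescent v k

/-- Covering relation of left weak order. -/
noncomputable def covL (cs : CoxeterSystem M W) (x y : W) : Prop :=
  leL cs x y ∧ x ≠ y ∧ ∀ z, leL cs x z → leL cs z y → z = x ∨ z = y

end

/-!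
Bruhat order is used in its chain form `BruhatLE`; the subword property identifies it with `leB`.
Both rest on the strong exchange condition, obtained from Tits' sign representation of `W` on
`W × ZMod 2`: its second coordinate records the parity of the number of occurrences of a reflection
in the left inversion sequence of a word, which therefore depends only on the product of the word.

For `w, a ∈ W` the set `{w * c | c ≤ a}` has a greatest element, the Demazure product `w ⋆ a`,
with `w ⋆ 1 = w` and `w ⋆ (a·π_i) = (w ⋆ a)·π_i`. Since `π_i` and `π̄_i` are Bruhat-monotone,
`x·π̄_i ≤ x`, `x·π_i π̄_i = x·π̄_i` and `x·π̄_i π_i = x·π_i`, induction along a word in the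
generators gives `w·f ≤ w ⋆ (1·f)` for every `f` in the biHecke monoid; when `1·f = 1` this reads
`w·f ≤ w`.
-/

namespace CoxeterSystem

variable {B W : Type*} [Group W] {M : CoxeterMatrix B} (cs : CoxeterSystem M W)

local prefix:100 "s" => cs.simple
local prefix:100 "π" => cs.wordProd
local prefix:100 "ℓ" => cs.length
local prefix:100 "lis" => cs.leftInvSeq

theorem conj_simple_eq_simple_iff (i : B) (t : W) : MulAut.conj (s i) t = s i ↔ t = s i := by
  rw [MulAut.conj_apply, mul_inv_eq_iff_eq_mul, mul_right_inj]

theorem conj_simple_conj_simple (i : B) (t : W) : MulAut.conj (s i) (MulAut.conj (s i) t) = t := by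
  rw [← MulAut.mul_apply, ← map_mul, simple_mul_simple_self, map_one, MulAut.one_apply]

noncomputable def signAction (i : B) : Equiv.Perm (W × ZMod 2) :=
  Function.Involutive.toPerm
    (fun p => (MulAut.conj (s i) p.1, p.2 + if p.1 = s i then 1 else 0)) fun ⟨t, e⟩ => by
      simp only [conj_simple_conj_simple, conj_simple_eq_simple_iff, add_assoc, ← two_mul,
        (by decide : (2 : ZMod 2) = 0), zero_mul, add_zero]

theorem signAction_apply (i : B) (t : W) (e : ZMod 2) :
    cs.signAction i (t, e) = (MulAut.conj (s i) t, e + if t = s i then 1 else 0) := rfl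

theorem prod_map_signAction_apply (l : List B) (t : W) (e : ZMod 2) :
    (l.map cs.signAction).prod (t, e) =
      (MulAut.conj (π l) t, e + (lis l).count (MulAut.conj (π l) t)) := by
  induction l with
  | nil => simp
  | cons i l ih =>
    rw [List.map_cons, List.prod_cons, Equiv.Perm.mul_apply, ih, signAction_apply, wordProd_cons,
      map_mul, MulAut.mul_apply, leftInvSeq, List.count_cons,
      List.count_map_of_injective _ _ (MulAut.conj (s i)).injective]
    simp only [beq_iff_eq, @eq_comm _ (s i), conj_simple_eq_simple_iff]
    push_cast
    rw [add_assoc]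

theorem prod_map_alternatingWord_two_mul {G : Type*} [Monoid G] (f : B → G) (i i' : B) (m : ℕ) :
    ((alternatingWord i i' (2 * m)).map f).prod = (f i * f i') ^ m := by
  induction m with
  | zero => simp [alternatingWord]
  | succ m ih =>
    rw [show 2 * (m + 1) = 2 * m + 1 + 1 by ring, alternatingWord_succ', alternatingWord_succ']
    simp [ih, pow_succ', mul_assoc]

theorem wordProd_alternatingWord_two_mul_eq_one (i i' : B) :
    π (alternatingWord i i' (2 * M i i')) = 1 := by
  simp [prod_alternatingWord_eq_mul_pow, simple_mul_simple_pow]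

theorem even_count_leftInvSeq_alternatingWord (i i' : B) (t : W) :
    Even ((lis (alternatingWord i i' (2 * M i i'))).count t) := by
  set L := lis (alternatingWord i i' (2 * M i i'))
  have hL : L.length = 2 * M i i' := by simp [L]
  have hperiodic : L.drop (M i i') = L.take (M i i') := by
    refine List.ext_getElem (by simp [hL]; omega) fun k hk _ => ?_
    simp only [List.length_drop, hL] at hk
    simp only [List.getElem_drop, List.getElem_take, L]
    rw [getElem_leftInvSeq_alternatingWord _ _ _ _ _ (by omega),
      getElem_leftInvSeq_alternatingWord _ _ _ _ _ (by omega)]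
    have hodd (n : ℕ) : ¬ Even (2 * n + 1) := by simp [parity_simps]
    have hhalf (n : ℕ) : (2 * n + 1) / 2 = n := by omega
    rw [prod_alternatingWord_eq_mul_pow, prod_alternatingWord_eq_mul_pow, if_neg (hodd _),
      if_neg (hodd _), hhalf, hhalf, pow_add, M.symmetric, simple_mul_simple_pow, one_mul]
  rw [← List.take_append_drop (M i i') L, List.count_append, hperiodic]
  exact ⟨_, rfl⟩

theorem isLiftable_signAction : M.IsLiftable cs.signAction := fun i i' => by
  ext ⟨t, e⟩ : 1
  rw [← prod_map_alternatingWord_two_mul, prod_map_signAction_apply,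
    wordProd_alternatingWord_two_mul_eq_one, map_one, MulAut.one_apply,
    (ZMod.natCast_eq_zero_iff_even).2 (cs.even_count_leftInvSeq_alternatingWord i i' t), add_zero]
  rfl

noncomputable def signRep : W →* Equiv.Perm (W × ZMod 2) :=
  cs.lift ⟨cs.signAction, cs.isLiftable_signAction⟩

theorem signRep_wordProd (l : List B) : cs.signRep (π l) = (l.map cs.signAction).prod := by
  rw [wordProd, map_list_prod, List.map_map]
  congr 1
  exact List.map_congr_left fun i _ => cs.lift_apply_simple cs.isLiftable_signAction i

noncomputable def leftInvParity (w t : W) : ZMod 2 :=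
  (cs.signRep w (MulAut.conj w⁻¹ t, 0)).2

theorem leftInvParity_wordProd (l : List B) (t : W) :
    cs.leftInvParity (π l) t = (lis l).count t := by
  rw [leftInvParity, signRep_wordProd, prod_map_signAction_apply, ← MulAut.mul_apply, ← map_mul,
    mul_inv_cancel, map_one, MulAut.one_apply, zero_add]

theorem signRep_apply (w x : W) (e : ZMod 2) :
    cs.signRep w (x, e) = (MulAut.conj w x, e + cs.leftInvParity w (MulAut.conj w x)) := by
  obtain ⟨l, rfl⟩ := cs.wordProd_surjective w
  rw [signRep_wordProd, prod_map_signAction_apply, leftInvParity_wordProd]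

theorem leftInvParity_mul (u v t : W) :
    cs.leftInvParity (u * v) t =
      cs.leftInvParity u t + cs.leftInvParity v (MulAut.conj u⁻¹ t) := by
  have hv : MulAut.conj v (MulAut.conj (u * v)⁻¹ t) = MulAut.conj u⁻¹ t := by
    simp only [MulAut.conj_apply]; group
  have hu : MulAut.conj u (MulAut.conj u⁻¹ t) = t := by simp only [MulAut.conj_apply]; group
  rw [leftInvParity, map_mul, Equiv.Perm.mul_apply, signRep_apply, signRep_apply, hv, hu,
    zero_add, add_comm]

theorem leftInvParity_one (t : W) : cs.leftInvParity 1 t = 0 := by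
  simpa using cs.leftInvParity_wordProd [] t

theorem leftInvParity_simple_self (i : B) : cs.leftInvParity (s i) (s i) = 1 := by
  simpa using cs.leftInvParity_wordProd [i] (s i)

theorem IsReflection.leftInvParity_self {t : W} (ht : cs.IsReflection t) :
    cs.leftInvParity t t = 1 := by
  obtain ⟨w, i, rfl⟩ := ht
  -- the outer factors `w`, `w⁻¹` contribute `leftInvParity (w * w⁻¹) t = 0` between them
  have hcancel := cs.leftInvParity_mul w w⁻¹ (w * s i * w⁻¹)
  rw [mul_inv_cancel, leftInvParity_one] at hcancel
  rw [leftInvParity_mul, leftInvParity_mul]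
  have hs : w⁻¹ * (w * s i * w⁻¹) * w⁻¹⁻¹ = s i := by group
  have hs' : (w * s i)⁻¹ * (w * s i * w⁻¹) * (w * s i)⁻¹⁻¹ = s i := by
    rw [show (w * s i)⁻¹ * (w * s i * w⁻¹) * (w * s i)⁻¹⁻¹ = (s i)⁻¹ * s i * s i by group,
      inv_mul_cancel, one_mul]
  simp only [MulAut.conj_apply, hs, hs', leftInvParity_simple_self] at hcancel ⊢
  linear_combination -hcancel

theorem leftInvParity_eq_zero_of_not_isLeftInversion {w t : W}
    (h : ¬ cs.IsLeftInversion w t) : cs.leftInvParity w t = 0 := by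
  obtain ⟨l, hl, rfl⟩ := cs.exists_isReduced w
  rw [leftInvParity_wordProd,
    List.count_eq_zero.2 fun ht => h (cs.isLeftInversion_of_mem_leftInvSeq hl ht), Nat.cast_zero]

theorem mem_leftInvSeq_of_isLeftInversion {l : List B} {t : W}
    (h : cs.IsLeftInversion (π l) t) : t ∈ lis l := by
  obtain ⟨ht, hlt⟩ := h
  have hshorter : ¬ cs.IsLeftInversion (t * π l) t := fun ⟨_, h'⟩ => by
    rw [← mul_assoc, ht.mul_self, one_mul] at h'
    omega
  have hodd : cs.leftInvParity (π l) t = 1 := by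
    have hsplit := cs.leftInvParity_mul t (t * π l) t
    rw [← mul_assoc, ht.mul_self, one_mul, ht.leftInvParity_self, MulAut.conj_apply, ht.inv,
      mul_inv_cancel_right, cs.leftInvParity_eq_zero_of_not_isLeftInversion hshorter,
      add_zero] at hsplit
    exact hsplit
  rw [leftInvParity_wordProd] at hodd
  by_contra hmem
  rw [List.count_eq_zero.2 hmem, Nat.cast_zero] at hodd
  exact zero_ne_one hodd

theorem exists_sublist_of_isRightInversion {l : List B} {t : W}
    (h : cs.IsRightInversion (π l) t) :
    ∃ l' : List B, l'.Sublist l ∧ l'.length + 1 = l.length ∧ π l * t = π l' := by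
  have hmem := cs.mem_leftInvSeq_of_isLeftInversion (l := l.reverse)
    (by rwa [wordProd_reverse, isLeftInversion_inv_iff])
  obtain ⟨j, hj, hjt⟩ := List.mem_iff_getElem.1 hmem
  have herase := cs.getD_leftInvSeq_mul_wordProd l.reverse j
  rw [List.getD_eq_getElem _ _ hj, hjt, wordProd_reverse] at herase
  rw [length_leftInvSeq, List.length_reverse] at hj
  refine ⟨(l.reverse.eraseIdx j).reverse, ?_, ?_, ?_⟩
  · simpa using (List.eraseIdx_sublist l.reverse j).reverse
  · simp [List.length_eraseIdx, hj]
    omega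
  · rw [wordProd_reverse, ← herase, mul_inv_rev, inv_inv, h.1.inv]

theorem isReduced_append_singleton_iff {l : List B} {i : B} :
    cs.IsReduced (l ++ [i]) ↔ cs.IsReduced l ∧ ¬ cs.IsRightDescent (π l) i := by
  have hle := cs.length_wordProd_le l
  rw [not_isRightDescent_iff, IsReduced, IsReduced, wordProd_append, wordProd_singleton,
    List.length_append, List.length_singleton]
  have := cs.length_mul_simple (π l) i
  omega

def BruhatStep (u w : W) : Prop := ∃ t, cs.IsRightInversion w t ∧ u = w * t

def BruhatLE : W → W → Prop := Relation.ReflTransGen cs.BruhatStep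

variable {cs}

namespace BruhatLE

theorem refl (w : W) : cs.BruhatLE w w := Relation.ReflTransGen.refl

theorem trans {u v w : W} (huv : cs.BruhatLE u v) (hvw : cs.BruhatLE v w) : cs.BruhatLE u w :=
  Relation.ReflTransGen.trans huv hvw

theorem length_le {u w : W} (h : cs.BruhatLE u w) : ℓ u ≤ ℓ w := by
  induction h with
  | refl => rfl
  | tail _ hstep ih =>
    obtain ⟨t, ⟨_, hlt⟩, rfl⟩ := hstep
    omega

theorem eq_of_length_le {u w : W} (h : cs.BruhatLE u w) (hlen : ℓ w ≤ ℓ u) : u = w := by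
  rcases Relation.ReflTransGen.cases_head h with rfl | ⟨v, ⟨t, ⟨_, hlt⟩, rfl⟩, hvw⟩
  · rfl
  · have := length_le hvw
    omega

end BruhatLE

theorem bruhatLE_of_isRightInversion {w t : W} (h : cs.IsRightInversion w t) :
    cs.BruhatLE (w * t) w :=
  Relation.ReflTransGen.single ⟨t, h, rfl⟩

theorem mul_simple_bruhatLE {w : W} {i : B} (h : cs.IsRightDescent w i) :
    cs.BruhatLE (w * s i) w :=
  bruhatLE_of_isRightInversion ⟨cs.isReflection_simple i, h⟩

theorem bruhatLE_mul_simple {w : W} {i : B} (h : ¬ cs.IsRightDescent w i) :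
    cs.BruhatLE w (w * s i) := by
  rw [isRightDescent_iff_not_isRightDescent_mul, not_not] at h
  simpa using mul_simple_bruhatLE h

theorem BruhatLE.mul_simple_of_subword_below {n : ℕ}
    (hsub : ∀ l l' : List B, cs.IsReduced l → l.length < n → l'.Sublist l →
      cs.BruhatLE (π l') (π l))
    {x y : W} {i : B} (hxy : cs.BruhatLE x y) (hy : ℓ y ≤ n) (hyi : ¬ cs.IsRightDescent y i) :
    cs.BruhatLE (x * s i) (y * s i) := by
  induction hxy using Relation.ReflTransGen.head_induction_on with
  | refl => exact refl _
  | @head _ x' hstep hrest ih =>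
    obtain ⟨t, ht, rfl⟩ := hstep
    by_cases hx' : cs.IsRightDescent x' i
    · obtain ⟨τ, hτ, hτx⟩ := cs.exists_isReduced (x' * s i)
      have hword : π (τ ++ [i]) = x' := by
        rw [wordProd_append, wordProd_singleton, ← hτx, simple_mul_simple_cancel_right]
      rw [← hword] at ht
      obtain ⟨m, hm, hmlen, hmprod⟩ := cs.exists_sublist_of_isRightInversion ht
      rw [hword] at hmprod
      obtain ⟨m₁, m₂, rfl, hm₁, hm₂⟩ := List.sublist_append_iff.1 hm
      rcases List.sublist_singleton.1 hm₂ with rfl | rfl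
      · -- the erased letter is the final `i`, so `x' * t = x' * s i`
        have : m₁ = τ := hm₁.eq_of_length (by simpa using hmlen)
        rw [hmprod, this, List.append_nil, ← hτx, simple_mul_simple_cancel_right]
        exact hrest.trans (bruhatLE_mul_simple hyi)
      · have hτlen : τ.length < n := by
          have hdesc := cs.isRightDescent_iff.1 hx'
          rw [hτx, hτ.eq] at hdesc
          have := length_le hrest
          omega
        rw [hmprod, wordProd_append, wordProd_singleton, simple_mul_simple_cancel_right]
        exact (hsub τ m₁ hτ hτlen hm₁).trans (hτx ▸ ih)
    · -- `x' * t * s i ⟶ x' * s i` is itself a Bruhat step, by the reflection `s i * t * s i`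
      have hprod : x' * s i * (s i * t * s i) = x' * t * s i := by simp [mul_assoc]
      refine Relation.ReflTransGen.head ⟨s i * t * s i, ⟨by simpa using ht.1.conj (s i), ?_⟩,
        hprod.symm⟩ ih
      have := ht.2
      have := cs.length_mul_simple (x' * t) i
      rw [not_isRightDescent_iff] at hx'
      rw [hprod]
      omega

theorem bruhatLE_wordProd_of_sublist {l l' : List B} (hl : cs.IsReduced l)
    (h : l'.Sublist l) : cs.BruhatLE (π l') (π l) := by
  suffices ∀ n, ∀ l l' : List B, cs.IsReduced l → l.length < n → l'.Sublist l →
      cs.BruhatLE (π l') (π l) from this _ l l' hl (Nat.lt_succ_self _) h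
  intro n
  induction n with
  | zero => intros; omega
  | succ n ih =>
    intro l l' hl hlen h
    rcases List.eq_nil_or_concat l with rfl | ⟨τ, i, rfl⟩
    · rw [List.sublist_nil.1 h]
      exact BruhatLE.refl _
    rw [List.concat_eq_append] at hl hlen h ⊢
    obtain ⟨hτ, hτi⟩ := cs.isReduced_append_singleton_iff.1 hl
    obtain ⟨m₁, m₂, rfl, hm₁, hm₂⟩ := List.sublist_append_iff.1 h
    have hτlen : τ.length < n := by simp at hlen; omega
    have hle := ih τ m₁ hτ hτlen hm₁
    rcases List.sublist_singleton.1 hm₂ with rfl | rfl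
    · simpa [wordProd_append] using hle.trans (bruhatLE_mul_simple hτi)
    · simpa [wordProd_append] using hle.mul_simple_of_subword_below ih (hτ.eq ▸ hτlen.le) hτi

theorem BruhatLE.mul_simple {x y : W} {i : B} (h : cs.BruhatLE x y)
    (hy : ¬ cs.IsRightDescent y i) : cs.BruhatLE (x * s i) (y * s i) :=
  h.mul_simple_of_subword_below (fun _ _ hl _ => bruhatLE_wordProd_of_sublist hl) le_rfl hy

theorem BruhatLE.exists_sublist {u : W} {l : List B} (h : cs.BruhatLE u (π l)) :
    ∃ l' : List B, l'.Sublist l ∧ π l' = u := by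
  induction h using Relation.ReflTransGen.head_induction_on with
  | refl => exact ⟨l, List.Sublist.refl l, rfl⟩
  | head hstep _ ih =>
    obtain ⟨t, ht, rfl⟩ := hstep
    obtain ⟨m, hm, rfl⟩ := ih
    obtain ⟨m', hm', -, hm'prod⟩ := cs.exists_sublist_of_isRightInversion ht
    exact ⟨m', hm'.trans hm, hm'prod.symm⟩

theorem leB_iff_bruhatLE {u w : W} : leB cs u w ↔ cs.BruhatLE u w := by
  constructor
  · rintro ⟨l, hl, rfl, l', h, rfl⟩
    exact bruhatLE_wordProd_of_sublist hl h
  · intro h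
    obtain ⟨l, hl, rfl⟩ := cs.exists_isReduced w
    obtain ⟨l', h', rfl⟩ := h.exists_sublist
    exact ⟨l, hl, rfl, l', h', rfl⟩

theorem BruhatLE.le_mul_simple_or_mul_simple_le {u w : W} {i : B} (h : cs.BruhatLE u w) :
    cs.BruhatLE u (w * s i) ∨ cs.BruhatLE (u * s i) (w * s i) := by
  obtain ⟨τ, hτ, hτw⟩ := cs.exists_isReduced (w * s i)
  have hword : π (τ ++ [i]) = w := by
    rw [wordProd_append, wordProd_singleton, ← hτw, simple_mul_simple_cancel_right]
  rw [← hword] at h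
  obtain ⟨m, hm, rfl⟩ := h.exists_sublist
  obtain ⟨m₁, m₂, rfl, hm₁, hm₂⟩ := List.sublist_append_iff.1 hm
  rw [hτw]
  rcases List.sublist_singleton.1 hm₂ with rfl | rfl
  · left
    simpa using bruhatLE_wordProd_of_sublist hτ hm₁
  · right
    simpa [wordProd_append] using bruhatLE_wordProd_of_sublist hτ hm₁

theorem BruhatLE.mul_simple_le {x y : W} {i : B} (h : cs.BruhatLE x y)
    (hy : cs.IsRightDescent y i) : cs.BruhatLE (x * s i) y := by
  rcases h.le_mul_simple_or_mul_simple_le (i := i) with h' | h'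
  · have hasc : ¬ cs.IsRightDescent (y * s i) i := by
      rwa [← isRightDescent_iff_not_isRightDescent_mul]
    simpa using h'.mul_simple hasc
  · exact h'.trans (mul_simple_bruhatLE hy)

theorem piOp_of_isRightDescent {x : W} {i : B} (h : cs.IsRightDescent x i) : piOp cs i x = x :=
  if_pos h

theorem piOp_of_not_isRightDescent {x : W} {i : B} (h : ¬ cs.IsRightDescent x i) :
    piOp cs i x = x * s i :=
  if_neg h

theorem pibOp_of_isRightDescent {x : W} {i : B} (h : cs.IsRightDescent x i) :
    pibOp cs i x = x * s i :=
  if_pos h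

theorem pibOp_of_not_isRightDescent {x : W} {i : B} (h : ¬ cs.IsRightDescent x i) :
    pibOp cs i x = x :=
  if_neg h

theorem le_piOp (x : W) (i : B) : cs.BruhatLE x (piOp cs i x) := by
  by_cases h : cs.IsRightDescent x i
  · rw [piOp_of_isRightDescent h]
    exact BruhatLE.refl x
  · rw [piOp_of_not_isRightDescent h]
    exact bruhatLE_mul_simple h

theorem mul_simple_le_piOp (x : W) (i : B) : cs.BruhatLE (x * s i) (piOp cs i x) := by
  by_cases h : cs.IsRightDescent x i
  · rw [piOp_of_isRightDescent h]
    exact mul_simple_bruhatLE h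
  · rw [piOp_of_not_isRightDescent h]
    exact BruhatLE.refl _

theorem piOp_le {x z : W} {i : B} (hx : cs.BruhatLE x z) (hxs : cs.BruhatLE (x * s i) z) :
    cs.BruhatLE (piOp cs i x) z := by
  unfold piOp
  split_ifs
  exacts [hx, hxs]

theorem pibOp_le (x : W) (i : B) : cs.BruhatLE (pibOp cs i x) x := by
  by_cases h : cs.IsRightDescent x i
  · rw [pibOp_of_isRightDescent h]
    exact mul_simple_bruhatLE h
  · rw [pibOp_of_not_isRightDescent h]
    exact BruhatLE.refl x

theorem pibOp_le_mul_simple (x : W) (i : B) : cs.BruhatLE (pibOp cs i x) (x * s i) := by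
  by_cases h : cs.IsRightDescent x i
  · rw [pibOp_of_isRightDescent h]
    exact BruhatLE.refl _
  · rw [pibOp_of_not_isRightDescent h]
    exact bruhatLE_mul_simple h

theorem pibOp_piOp (x : W) (i : B) : pibOp cs i (piOp cs i x) = pibOp cs i x := by
  by_cases h : cs.IsRightDescent x i
  · rw [piOp_of_isRightDescent h]
  · have hxs : cs.IsRightDescent (x * s i) i := by
      rwa [isRightDescent_iff_not_isRightDescent_mul, simple_mul_simple_cancel_right]
    rw [piOp_of_not_isRightDescent h, pibOp_of_isRightDescent hxs, pibOp_of_not_isRightDescent h,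
      simple_mul_simple_cancel_right]

theorem piOp_pibOp (x : W) (i : B) : piOp cs i (pibOp cs i x) = piOp cs i x := by
  by_cases h : cs.IsRightDescent x i
  · have hxs : ¬ cs.IsRightDescent (x * s i) i := by
      rwa [← isRightDescent_iff_not_isRightDescent_mul]
    rw [pibOp_of_isRightDescent h, piOp_of_not_isRightDescent hxs, piOp_of_isRightDescent h,
      simple_mul_simple_cancel_right]
  · rw [pibOp_of_not_isRightDescent h]

theorem piOp_mono {x y : W} (i : B) (h : cs.BruhatLE x y) :
    cs.BruhatLE (piOp cs i x) (piOp cs i y) := by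
  by_cases hy : cs.IsRightDescent y i
  · rw [piOp_of_isRightDescent hy]
    exact piOp_le h (h.mul_simple_le hy)
  · exact piOp_le (h.trans (le_piOp y i)) ((h.mul_simple hy).trans (mul_simple_le_piOp y i))

theorem pibOp_mono {x y : W} (i : B) (h : cs.BruhatLE x y) :
    cs.BruhatLE (pibOp cs i x) (pibOp cs i y) := by
  by_cases hy : cs.IsRightDescent y i
  · rw [pibOp_of_isRightDescent hy]
    rcases h.le_mul_simple_or_mul_simple_le (i := i) with h' | h'
    exacts [(pibOp_le x i).trans h', (pibOp_le_mul_simple x i).trans h']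
  · rw [pibOp_of_not_isRightDescent hy]
    exact (pibOp_le x i).trans h

variable (cs) in
def IsDemazureProduct (w a z : W) : Prop :=
  (∃ c, cs.BruhatLE c a ∧ z = w * c) ∧ ∀ c, cs.BruhatLE c a → cs.BruhatLE (w * c) z

theorem isDemazureProduct_one (w : W) : cs.IsDemazureProduct w 1 w :=
  ⟨⟨1, BruhatLE.refl 1, (mul_one w).symm⟩, fun c hc => by
    rw [hc.eq_of_length_le (by simp), mul_one]
    exact BruhatLE.refl w⟩

namespace IsDemazureProduct

variable {w a z : W}

theorem unique {z' : W} (hz : cs.IsDemazureProduct w a z) (hz' : cs.IsDemazureProduct w a z') :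
    z = z' := by
  obtain ⟨⟨c, hc, rfl⟩, hmax⟩ := hz
  obtain ⟨⟨c', hc', rfl⟩, hmax'⟩ := hz'
  exact (hmax' c hc).eq_of_length_le (hmax c' hc').length_le

theorem isRightDescent {i : B} (hz : cs.IsDemazureProduct w a z) (ha : cs.IsRightDescent a i) :
    cs.IsRightDescent z i := by
  obtain ⟨⟨c, hc, rfl⟩, hmax⟩ := hz
  have hle := (hmax _ (hc.mul_simple_le ha)).length_le
  rw [← mul_assoc] at hle
  have := cs.length_mul_simple_ne (w * c) i
  unfold IsRightDescent
  omega

theorem mul_simple {i : B} (hz : cs.IsDemazureProduct w a z) (ha : ¬ cs.IsRightDescent a i) :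
    cs.IsDemazureProduct w (a * s i) (piOp cs i z) := by
  obtain ⟨⟨c, hc, rfl⟩, hmax⟩ := hz
  refine ⟨?_, fun c' hc' => ?_⟩
  · by_cases hwc : cs.IsRightDescent (w * c) i
    · rw [piOp_of_isRightDescent hwc]
      exact ⟨c, hc.trans (bruhatLE_mul_simple ha), rfl⟩
    · rw [piOp_of_not_isRightDescent hwc]
      exact ⟨c * s i, hc.mul_simple ha, mul_assoc _ _ _⟩
  · rcases hc'.le_mul_simple_or_mul_simple_le (i := i) with h | h <;>
      rw [simple_mul_simple_cancel_right] at h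
    · exact (hmax c' h).trans (le_piOp _ i)
    · simpa [mul_assoc] using (mul_simple_le_piOp _ i).trans (piOp_mono i (hmax _ h))

theorem piOp (hz : cs.IsDemazureProduct w a z) (i : B) :
    cs.IsDemazureProduct w (piOp cs i a) (piOp cs i z) := by
  by_cases ha : cs.IsRightDescent a i
  · rwa [piOp_of_isRightDescent ha, piOp_of_isRightDescent (hz.isRightDescent ha)]
  · rw [piOp_of_not_isRightDescent ha]
    exact hz.mul_simple ha

end IsDemazureProduct

theorem exists_isDemazureProduct (w a : W) : ∃ z, cs.IsDemazureProduct w a z := by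
  obtain ⟨l, hl, rfl⟩ := cs.exists_isReduced a
  induction l using List.reverseRecOn with
  | nil => exact ⟨w, isDemazureProduct_one w⟩
  | append_singleton τ i ih =>
    obtain ⟨hτ, hτi⟩ := cs.isReduced_append_singleton_iff.1 hl
    obtain ⟨z, hz⟩ := ih hτ
    exact ⟨_, by simpa [wordProd_append] using hz.mul_simple hτi⟩

theorem bruhatLE_of_mem_biHecke {f : Function.End W} (hf : f ∈ biHecke cs) {w z : W}
    (hz : cs.IsDemazureProduct w (f 1) z) : cs.BruhatLE (f w) z := by
  induction hf using Submonoid.closure_induction_left generalizing w z with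
  | one => exact (isDemazureProduct_one w).unique hz ▸ BruhatLE.refl w
  | mul_left g hg f _ ih =>
    obtain ⟨z₀, hz₀⟩ := exists_isDemazureProduct w (f 1)
    rcases hg with ⟨i, rfl⟩ | ⟨i, rfl⟩
    · rw [← (hz₀.piOp i).unique hz]
      exact piOp_mono i (ih hz₀)
    · change cs.IsDemazureProduct w (pibOp cs i (f 1)) z at hz
      have hz' := hz.piOp i
      rw [piOp_pibOp] at hz'
      have hpib : pibOp cs i z₀ = pibOp cs i z := by
        rw [← pibOp_piOp z₀, (hz₀.piOp i).unique hz', pibOp_piOp]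
      have hle := pibOp_mono i (ih hz₀)
      rw [hpib] at hle
      exact hle.trans (pibOp_le z i)

end CoxeterSystem

theorem biHecke_fix_one_contracting_general {B W : Type*} [Group W] {M : CoxeterMatrix B}
    (cs : CoxeterSystem M W) (f : Function.End W) (hf : f ∈ biHecke cs)
    (h1 : f 1 = 1) (w : W) : leB cs (f w) w := by
  rw [CoxeterSystem.leB_iff_bruhatLE]
  apply CoxeterSystem.bruhatLE_of_mem_biHecke hf
  rw [h1]
  exact CoxeterSystem.isDemazureProduct_one w

/-- Any element of the biHecke monoid fixing the identity is contracting for Bruhat order. -/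
theorem biHecke_fix_one_contracting {B W : Type*} [Group W] [Finite W] {M : CoxeterMatrix B}
    (cs : CoxeterSystem M W) (f : Function.End W) (hf : f ∈ biHecke cs)
    (h1 : f 1 = 1) (w : W) : leB cs (f w) w :=
  biHecke_fix_one_contracting_general cs f hf h1 w
end

section
/- Any element of the biHecke monoid is uniquely determined by its fibers and its image set: if f, g ∈ M(W) have the same partition of W into fibers and the same image set, then f = g. -/
open scoped Classical

/-!
Each generator `π_i`, `π̄_i`, and hence each `f ∈ M(W)`, sends a left weak order cover
`x ⋖ s_j x` either to a single point or to a cover `f x ⋖ s_j (f x)` along the same `s_j`. The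
only delicate case is `x s_i > x`, `s_j x s_i < s_j x`, where the exchange property forces
`s_j x = x s_i`, a consequence of Tits' sign cocycle on `W × ℤˣ`. Hence `f 1` is the least
element of the image of `f` in left weak order, so equal images give `f 1 = g 1`, and along a
reduced expression of `w` each step `f (s_j x) ∈ {f x, s_j (f x)}` is decided by the fibers.
-/

namespace CoxeterSystem

variable {B W : Type*} [Group W] {M : CoxeterMatrix B} (cs : CoxeterSystem M W)

local prefix:100 "s " => cs.simple
local prefix:100 "π " => cs.wordProd
local prefix:100 "ℓ " => cs.length
local prefix:100 "lis " => cs.leftInvSeq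

/-- Tits' sign cocycle: the action of `s i` on pairs (reflection, sign). -/
noncomputable def reflectionPerm (i : B) : Equiv.Perm (W × ℤˣ) :=
  Function.Involutive.toPerm (fun p => (s i * p.1 * s i, if p.1 = s i then -p.2 else p.2)) <| by
    rintro ⟨t, ε⟩
    by_cases h : t = s i <;> simp [h, mul_assoc, mul_eq_one_iff_eq_inv]

@[simp]
theorem reflectionPerm_apply (i : B) (t : W) (ε : ℤˣ) :
    cs.reflectionPerm i (t, ε) = (s i * t * s i, if t = s i then -ε else ε) :=
  rfl

theorem list_prod_map_reflectionPerm_apply (ω : List B) (t : W) (ε : ℤˣ) :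
    (ω.map cs.reflectionPerm).prod (t, ε) =
      (π ω * t * (π ω)⁻¹, ε * (-1) ^ (lis ω).count (π ω * t * (π ω)⁻¹)) := by
  induction ω with
  | nil => simp
  | cons i ω ih =>
    set u := π ω * t * (π ω)⁻¹
    have hconj : π (i :: ω) * t * (π (i :: ω))⁻¹ = MulAut.conj (s i) u := by
      simp [u, wordProd_cons, mul_assoc]
    have hcount : (lis (i :: ω)).count (MulAut.conj (s i) u)
        = (lis ω).count u + if u = s i then 1 else 0 := by
      rw [leftInvSeq, List.count_cons, List.count_map_of_injective _ _ (MulAut.conj (s i)).injective]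
      simp [MulAut.conj_apply, mul_assoc, mul_eq_one_iff_eq_inv]
    rw [List.map_cons, List.prod_cons, Equiv.Perm.mul_apply, ih, hconj, hcount]
    by_cases h : u = s i <;> simp [h, pow_succ, MulAut.conj_apply]

theorem list_prod_map_alternatingWord {G : Type*} [Monoid G] (f : B → G) (i j : B) (p : ℕ) :
    ((alternatingWord i j (2 * p)).map f).prod = (f i * f j) ^ p := by
  induction p with
  | zero => simp [alternatingWord]
  | succ p ih =>
    rw [show 2 * (p + 1) = 2 * p + 1 + 1 by ring, alternatingWord_succ', alternatingWord_succ']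
    simp [ih, pow_succ', mul_assoc]

theorem wordProd_alternatingWord_two_mul (i j : B) : π (alternatingWord i j (2 * M i j)) = 1 := by
  simp [prod_alternatingWord_eq_mul_pow, cs.simple_mul_simple_pow]

/-- The `k`-th left inversion `s i (s j s i) ^ k` of this word is periodic in `k` with period
`M i j`, so every reflection occurs an even number of times. -/
theorem even_count_leftInvSeq_alternatingWord_two_mul (i j : B) (t : W) :
    Even ((lis (alternatingWord i j (2 * M i j))).count t) := by
  set m := M i j
  have hlis : lis (alternatingWord i j (2 * m))
      = (List.range (m + m)).map fun k => s i * (s j * s i) ^ k := by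
    refine List.ext_getElem (by simp [two_mul]) fun k hk _ => ?_
    rw [getElem_leftInvSeq_alternatingWord cs i j m k (by simpa using hk),
      prod_alternatingWord_eq_mul_pow]
    simp [Nat.mul_add_div]
  have hperiod : ∀ k, s i * (s j * s i) ^ (m + k) = s i * (s j * s i) ^ k := by
    intro k
    rw [pow_add, cs.simple_mul_simple_pow', one_mul]
  rw [hlis, List.range_add, List.map_append, List.map_map]
  simp only [Function.comp_def, hperiod, List.count_append]
  exact ⟨_, rfl⟩

theorem isLiftable_reflectionPerm : M.IsLiftable cs.reflectionPerm := by
  intro i j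
  rw [← list_prod_map_alternatingWord]
  ext ⟨t, ε⟩ : 1
  rw [list_prod_map_reflectionPerm_apply, wordProd_alternatingWord_two_mul,
    (cs.even_count_leftInvSeq_alternatingWord_two_mul i j _).neg_one_pow]
  simp

theorem lift_reflectionPerm_wordProd (ω : List B) :
    cs.lift ⟨_, cs.isLiftable_reflectionPerm⟩ (π ω) = (ω.map cs.reflectionPerm).prod := by
  rw [wordProd, map_list_prod, List.map_map]
  congr 1
  exact List.map_congr_left fun i _ => cs.lift_apply_simple cs.isLiftable_reflectionPerm i

theorem neg_one_pow_count_leftInvSeq_congr {ω ω' : List B} (h : π ω = π ω') (t : W) :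
    (-1 : ℤˣ) ^ (lis ω).count t = (-1) ^ (lis ω').count t := by
  have key := congrArg (fun w => (cs.lift ⟨_, cs.isLiftable_reflectionPerm⟩ w
    ((π ω)⁻¹ * t * π ω, 1)).2) h
  simp only [lift_reflectionPerm_wordProd, list_prod_map_reflectionPerm_apply] at key
  rw [← h] at key
  simpa [mul_assoc] using key

theorem simple_mem_leftInvSeq_of_isLeftDescent {ω : List B} {i : B}
    (hi : cs.IsLeftDescent (π ω) i) : s i ∈ lis ω := by
  obtain ⟨ω₀, hω₀, hprod⟩ := cs.exists_isReduced (s i * π ω)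
  have hprod' : π (i :: ω₀) = π ω := by
    rw [wordProd_cons, ← hprod, simple_mul_simple_cancel_left]
  have hred : cs.IsReduced (i :: ω₀) := by
    have : ℓ (s i * π ω) < ℓ (π ω) := hi
    have := cs.length_simple_mul (π ω) i
    unfold IsReduced at hω₀ ⊢
    rw [hprod', List.length_cons, ← hω₀, ← hprod]
    omega
  have hcount : (lis (i :: ω₀)).count (s i) = 1 :=
    List.count_eq_one_of_mem hred.nodup_leftInvSeq (by simp [leftInvSeq])
  have hpar := cs.neg_one_pow_count_leftInvSeq_congr hprod' (s i)
  rw [hcount, pow_one] at hpar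
  refine List.count_pos_iff.mp (Nat.pos_of_ne_zero fun h0 => ?_)
  rw [h0, pow_zero] at hpar
  exact absurd hpar (by decide)

theorem simple_mul_eq_mul_simple_of_isRightDescent {x : W} {i j : B}
    (hj : ¬cs.IsLeftDescent x j) (hi : ¬cs.IsRightDescent x i)
    (h : cs.IsRightDescent (s j * x) i) : s j * x = x * s i := by
  obtain ⟨ω, hω, rfl⟩ := cs.exists_isReduced x
  rw [not_isLeftDescent_iff] at hj
  rw [not_isRightDescent_iff] at hi
  rw [isRightDescent_iff] at h
  have hprod : π (ω ++ [i]) = π ω * s i := by simp [wordProd_append]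
  unfold IsReduced at hω
  have hdesc : cs.IsLeftDescent (π (ω ++ [i])) j := by
    rw [IsLeftDescent, hprod, ← mul_assoc]
    omega
  obtain ⟨k, hk, hkj⟩ := List.getElem_of_mem (cs.simple_mem_leftInvSeq_of_isLeftDescent hdesc)
  have hexch := cs.getD_leftInvSeq_mul_wordProd (ω ++ [i]) k
  rw [List.getD_eq_getElem _ _ hk, hkj, hprod] at hexch
  simp only [length_leftInvSeq, List.length_append, List.length_singleton] at hk
  rcases Nat.lt_succ_iff_lt_or_eq.mp hk with hk | rfl
  · rw [List.eraseIdx_append_of_lt_length hk, wordProd_append, wordProd_singleton,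
      ← mul_assoc, mul_left_inj] at hexch
    have := cs.length_wordProd_le (ω.eraseIdx k)
    rw [← hexch, List.length_eraseIdx_of_lt hk] at this
    omega
  · rw [List.eraseIdx_append_of_length_le le_rfl, Nat.sub_self, List.eraseIdx_cons_zero,
      List.append_nil] at hexch
    calc s j * π ω = s j * (π ω * s i) * s i := by simp [mul_assoc]
      _ = π ω * s i := by rw [hexch]

theorem induction_on_simple_mul {P : W → Prop} (one : P 1)
    (step : ∀ x j, ¬cs.IsLeftDescent x j → P x → P (s j * x)) (w : W) : P w := by
  induction h : ℓ w using Nat.strong_induction_on generalizing w with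
  | _ n ih =>
    obtain rfl | hw := eq_or_ne w 1
    · exact one
    obtain ⟨j, hj⟩ := cs.exists_leftDescent_of_ne_one hw
    have := step (s j * w) j (cs.isLeftDescent_iff_not_isLeftDescent_mul.mp hj)
      (ih _ (h ▸ hj) _ rfl)
    rwa [simple_mul_simple_cancel_left] at this

theorem isRightDescent_simple_mul {x : W} {i j : B} (hj : ¬cs.IsLeftDescent x j)
    (hi : cs.IsRightDescent x i) : cs.IsRightDescent (s j * x) i := by
  rw [not_isLeftDescent_iff] at hj
  rw [isRightDescent_iff] at hi ⊢
  have := cs.length_simple_mul (x * s i) j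
  rw [← mul_assoc] at this
  rcases cs.length_mul_simple (s j * x) i with h | h <;> omega

theorem not_isLeftDescent_mul_simple {x : W} {i j : B} (hj : ¬cs.IsLeftDescent x j)
    (hi : cs.IsRightDescent x i ↔ cs.IsRightDescent (s j * x) i) :
    ¬cs.IsLeftDescent (x * s i) j := by
  rw [not_isLeftDescent_iff] at hj ⊢
  rw [← mul_assoc]
  by_cases hx : cs.IsRightDescent x i
  · have hjx := hi.mp hx
    rw [isRightDescent_iff] at hx hjx
    omega
  · have hjx := (not_congr hi).mp hx
    rw [not_isRightDescent_iff] at hx hjx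
    omega

theorem isRightDescent_iff_or_exchange {x : W} {j : B} (hj : ¬cs.IsLeftDescent x j) (i : B) :
    (cs.IsRightDescent x i ↔ cs.IsRightDescent (s j * x) i) ∨
      (¬cs.IsRightDescent x i ∧ cs.IsRightDescent (s j * x) i ∧ s j * x = x * s i) := by
  by_cases hx : cs.IsRightDescent x i
  · exact Or.inl (iff_of_true hx (cs.isRightDescent_simple_mul hj hx))
  by_cases hjx : cs.IsRightDescent (s j * x) i
  · exact Or.inr ⟨hx, hjx, cs.simple_mul_eq_mul_simple_of_isRightDescent hj hx hjx⟩
  · exact Or.inl (iff_of_false hx hjx)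

def LeftStep (j : B) (x y : W) : Prop := y = x ∨ (y = s j * x ∧ ¬cs.IsLeftDescent x j)

namespace LeftStep

variable {cs}

theorem leL {j : B} {x y : W} (h : cs.LeftStep j x y) : leL cs x y := by
  rcases h with rfl | ⟨rfl, hj⟩
  · simp [_root_.leL]
  · rw [not_isLeftDescent_iff] at hj
    simp [_root_.leL, hj, add_comm]

theorem eq_of_iff {j : B} {x y z : W} (hy : cs.LeftStep j x y) (hz : cs.LeftStep j x z)
    (h : y = x ↔ z = x) : y = z := by
  rcases hy with rfl | ⟨rfl, hy⟩ <;> rcases hz with rfl | ⟨rfl, hz⟩ <;> simp_all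

end LeftStep

end CoxeterSystem

section BiHecke

open CoxeterSystem

variable {B W : Type*} [Group W] {M : CoxeterMatrix B} (cs : CoxeterSystem M W)

theorem leL_refl (x : W) : leL cs x x := by
  simp [leL]

theorem leL_trans {x y z : W} (hxy : leL cs x y) (hyz : leL cs y z) : leL cs x z := by
  unfold leL at *
  have h₁ := cs.length_mul_le (z * y⁻¹) (y * x⁻¹)
  have h₂ := cs.length_mul_le (z * x⁻¹) x
  simp only [mul_assoc, inv_mul_cancel_left, inv_mul_cancel, mul_one] at h₁ h₂
  omega

theorem leL_antisymm {x y : W} (hxy : leL cs x y) (hyx : leL cs y x) : x = y := by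
  unfold leL at *
  have h : cs.length (y * x⁻¹) = 0 := by omega
  rw [length_eq_zero_iff, mul_inv_eq_one] at h
  exact h.symm

theorem piOp_leftStep (i j : B) {x y : W} (h : cs.LeftStep j x y) :
    cs.LeftStep j (piOp cs i x) (piOp cs i y) := by
  rcases h with rfl | ⟨rfl, hj⟩
  · exact Or.inl rfl
  rcases cs.isRightDescent_iff_or_exchange hj i with hiff | ⟨hx, hjx, hexch⟩
  · by_cases hx : cs.IsRightDescent x i
    · simp only [piOp, if_pos hx, if_pos (hiff.mp hx)]
      exact Or.inr ⟨rfl, hj⟩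
    · simp only [piOp, if_neg hx, if_neg (mt hiff.mpr hx)]
      exact Or.inr ⟨mul_assoc _ _ _, cs.not_isLeftDescent_mul_simple hj hiff⟩
  · rw [hexch] at hjx ⊢
    simp only [piOp, if_neg hx, if_pos hjx]
    exact Or.inl rfl

theorem pibOp_leftStep (i j : B) {x y : W} (h : cs.LeftStep j x y) :
    cs.LeftStep j (pibOp cs i x) (pibOp cs i y) := by
  rcases h with rfl | ⟨rfl, hj⟩
  · exact Or.inl rfl
  rcases cs.isRightDescent_iff_or_exchange hj i with hiff | ⟨hx, hjx, hexch⟩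
  · by_cases hx : cs.IsRightDescent x i
    · simp only [pibOp, if_pos hx, if_pos (hiff.mp hx)]
      exact Or.inr ⟨mul_assoc _ _ _, cs.not_isLeftDescent_mul_simple hj hiff⟩
    · simp only [pibOp, if_neg hx, if_neg (mt hiff.mpr hx)]
      exact Or.inr ⟨rfl, hj⟩
  · rw [hexch] at hjx ⊢
    simp only [pibOp, if_neg hx, if_pos hjx, simple_mul_simple_cancel_right]
    exact Or.inl rfl

theorem leftStep_apply_of_mem_biHecke {f : Function.End W} (hf : f ∈ biHecke cs) (j : B)
    {x y : W} (h : cs.LeftStep j x y) : cs.LeftStep j (f x) (f y) := by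
  induction hf using Submonoid.closure_induction generalizing x y with
  | mem g hg =>
    rcases hg with ⟨i, rfl⟩ | ⟨i, rfl⟩
    · exact piOp_leftStep cs i j h
    · exact pibOp_leftStep cs i j h
  | one => exact h
  | mul g g' _ _ ihg ihg' => exact ihg (ihg' h)

theorem leL_apply_one_of_mem_biHecke {f : Function.End W} (hf : f ∈ biHecke cs) (w : W) :
    leL cs (f 1) (f w) := by
  induction w using cs.induction_on_simple_mul with
  | one => exact leL_refl cs _
  | step x j hj ih =>
    exact leL_trans cs ih (leftStep_apply_of_mem_biHecke cs hf j (Or.inr ⟨rfl, hj⟩)).leL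

end BiHecke

theorem biHecke_fibers_image_determine_general {B W : Type*} [Group W]
    {M : CoxeterMatrix B} (cs : CoxeterSystem M W) (f g : Function.End W)
    (hf : f ∈ biHecke cs) (hg : g ∈ biHecke cs)
    (hfib : ∀ x y : W, f x = f y ↔ g x = g y)
    (him : Set.range f = Set.range g) : f = g := by
  have h_one : f 1 = g 1 := by
    obtain ⟨x, hx⟩ : f 1 ∈ Set.range g := him ▸ Set.mem_range_self 1
    obtain ⟨y, hy⟩ : g 1 ∈ Set.range f := him ▸ Set.mem_range_self 1
    exact leL_antisymm cs (hy ▸ leL_apply_one_of_mem_biHecke cs hf y)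
      (hx ▸ leL_apply_one_of_mem_biHecke cs hg x)
  funext w
  induction w using cs.induction_on_simple_mul with
  | one => exact h_one
  | step x j hj ih =>
    have hfx := leftStep_apply_of_mem_biHecke cs hf j (Or.inr ⟨rfl, hj⟩)
    have hgx := leftStep_apply_of_mem_biHecke cs hg j (Or.inr ⟨rfl, hj⟩)
    rw [← ih] at hgx
    exact hfx.eq_of_iff hgx (by rw [hfib _ x, ih])

/-- An element of the biHecke monoid is characterized by its fibers and its image set. -/
theorem biHecke_fibers_image_determine {B W : Type*} [Group W] [Finite W]
    {M : CoxeterMatrix B} (cs : CoxeterSystem M W) (f g : Function.End W)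
    (hf : f ∈ biHecke cs) (hg : g ∈ biHecke cs)
    (hfib : ∀ x y : W, f x = f y ↔ g x = g y)
    (him : Set.range f = Set.range g) : f = g :=
  biHecke_fibers_image_determine_general cs f g hf hg hfib him
end
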